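/- Let y = F(u,y) be a strongly reduced Henselian equation and let y_0 = Σ_{n >_grlex 0} c_n u^n ∈ K((u^{ℤ^r}))^{grlex} be a generalized series whose support is contained in {n ∈ ℤ^r : n >_grlex 0}. For each n ∈ ℤ^r with n >_grlex 0, write z̃_n := Σ_{m <_grlex n} c_m u^m for the truncation of y_0 strictly below n. Then the following are equivalent: (1) y_0 = F(u, y_0); (2) for every n >_grlex 0, w(z̃_n − F(u, z̃_n)) = w(y_0 − z̃_n); (3) for every n >_grlex 0, w(z̃_n − F(u, z̃_n)) ≥_grlex n. -/

import Mathlib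

instance (r : ℕ) : WellFoundedLT (Fin r) := inferInstance

/-- `ℤ^r`, to be equipped with the graded lexicographic order. -/
def GrLexZ (r : ℕ) : Type := Fin r → ℤ

namespace GrLexZ

variable {r : ℕ}

instance : AddCommGroup (GrLexZ r) := inferInstanceAs (AddCommGroup (Fin r → ℤ))

/-- The underlying function of an element of `GrLexZ r`. -/
def toFun (a : GrLexZ r) : Fin r → ℤ := a

@[simp] theorem toFun_add (a b : GrLexZ r) : toFun (a + b) = toFun a + toFun b := rfl

/-- The total degree `|a| = a₁ + ⋯ + a_r`. -/
def deg (a : GrLexZ r) : ℤ := ∑ i, toFun a i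

theorem deg_add (a b : GrLexZ r) : deg (a + b) = deg a + deg b := by
  simp [deg, Finset.sum_add_distrib]

/-- The comparison key realizing the graded lexicographic order:
first the total degree, then the lexicographic order. -/
def key (a : GrLexZ r) : ℤ ×ₗ Lex (Fin r → ℤ) := toLex (deg a, toLex (toFun a))

theorem key_injective : Function.Injective (key (r := r)) := by
  intro a b h
  have h2 : (ofLex (key a)).2 = (ofLex (key b)).2 := by rw [h]
  exact h2

theorem key_add (a b : GrLexZ r) : key (a + b) = key a + key b := by
  unfold key
  rw [deg_add]
  rfl

noncomputable instance : LinearOrder (GrLexZ r) := LinearOrder.lift' key key_injective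

theorem le_iff_key {a b : GrLexZ r} : a ≤ b ↔ key a ≤ key b := Iff.rfl

instance : IsOrderedAddMonoid (GrLexZ r) :=
  { add_le_add_left := by
      intro a b hab c
      rw [le_iff_key, key_add, key_add]
      exact add_le_add (le_iff_key.mp hab) le_rfl }

end GrLexZ


/-- The Mod condition for a generalized series with exponents in `ℤ^r`:
its support is contained in `c + ℕ^r` for some `c ∈ ℤ^r`. -/
def HasMod {r : ℕ} {K : Type*} [Field K] (x : HahnSeries (GrLexZ r) K) : Prop :=
  ∃ c : GrLexZ r, ∀ n ∈ x.support, ∀ i, GrLexZ.toFun c i ≤ GrLexZ.toFun n i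

/-- A strongly reduced Henselian equation `y = F(u,y)`: `F` is a polynomial in `y` whose
coefficients satisfy the Mod condition and have valuation `>grlex 0`, and `F(u,0) ≠ 0`. -/
def StronglyReducedHenselian {r : ℕ} {K : Type*} [Field K]
    (F : Polynomial (HahnSeries (GrLexZ r) K)) : Prop :=
  (∀ j, HasMod (F.coeff j)) ∧
  (∀ j, F.coeff j ≠ 0 → 0 < (F.coeff j).order) ∧
  F.coeff 0 ≠ 0

/-- The truncation `z̃_n = Σ_{m <grlex n} c_m u^m` of a generalized series
`Σ_m c_m u^m`. -/
noncomputable def trunc {r : ℕ} {K : Type*} [Field K]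
    (x : HahnSeries (GrLexZ r) K) (n : GrLexZ r) : HahnSeries (GrLexZ r) K where
  coeff m := if m < n then x.coeff m else 0
  isPWO_support' := x.isPWO_support'.mono fun m hm => by
    simp only [Function.mem_support, ne_eq] at hm ⊢
    intro hx
    exact hm (by simp [hx])



section Helpers

open HahnSeries Polynomial Finset

namespace GrLexZ

theorem lt_iff_key {r : ℕ} {a b : GrLexZ r} : a < b ↔ key a < key b := by
  simp only [lt_iff_le_not_ge, le_iff_key]

theorem deg_zero {r : ℕ} : deg (0 : GrLexZ r) = 0 := by
  have h := deg_add (0 : GrLexZ r) 0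
  rw [add_zero] at h
  linarith

theorem lt_of_deg_lt {r : ℕ} {a b : GrLexZ r} (h : deg a < deg b) : a < b := by
  rw [lt_iff_key]
  unfold key
  rw [Prod.Lex.lt_iff]
  exact Or.inl h

theorem exists_big {r : ℕ} (hr : 1 ≤ r) (μ : GrLexZ r) :
    ∃ n : GrLexZ r, 0 < n ∧ μ < n := by
  set d : ℤ := max (deg μ) 0 + 1 with hd
  have hdpos : 0 < d := by positivity
  have hdμ : deg μ < d := by
    have : deg μ ≤ max (deg μ) 0 := le_max_left _ _
    omega
  refine ⟨(fun _ => d : Fin r → ℤ), ?_, ?_⟩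
  all_goals {
    apply lt_of_deg_lt
    have hdeg : deg (fun _ => d : Fin r → ℤ) = (r : ℤ) * d := by
      show (∑ _i : Fin r, d) = (r : ℤ) * d
      rw [Finset.sum_const, Finset.card_univ, Fintype.card_fin, nsmul_eq_mul]
    have h1 : (1 : ℤ) * d ≤ (r : ℤ) * d := by
      apply mul_le_mul_of_nonneg_right _ hdpos.le
      exact_mod_cast hr
    first
      | (rw [deg_zero, hdeg]; linarith)
      | (rw [hdeg]; linarith)
  }

end GrLexZ

variable {K : Type*} [Field K]

theorem le_orderTop_sum {Γ : Type*} [LinearOrder Γ] {c : WithTop Γ} {ι : Type*}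
    {s : Finset ι} {f : ι → HahnSeries Γ K}
    (h : ∀ i ∈ s, c ≤ (f i).orderTop) : c ≤ (∑ i ∈ s, f i).orderTop := by
  classical
  induction s using Finset.cons_induction with
  | empty => simp
  | cons a s ha ih =>
    rw [Finset.sum_cons]
    exact le_trans
      (le_min (h a (Finset.mem_cons_self a s))
        (ih fun i hi => h i (Finset.mem_cons.mpr (Or.inr hi))))
      min_orderTop_le_orderTop_add

theorem lt_orderTop_sum {Γ : Type*} [LinearOrder Γ] {c : WithTop Γ} (hc : c ≠ ⊤) {ι : Type*}
    {s : Finset ι} {f : ι → HahnSeries Γ K}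
    (h : ∀ i ∈ s, c < (f i).orderTop) : c < (∑ i ∈ s, f i).orderTop := by
  classical
  induction s using Finset.cons_induction with
  | empty => simpa using lt_top_iff_ne_top.mpr hc
  | cons a s ha ih =>
    rw [Finset.sum_cons]
    exact lt_of_lt_of_le
      (lt_min (h a (Finset.mem_cons_self a s))
        (ih fun i hi => h i (Finset.mem_cons.mpr (Or.inr hi))))
      min_orderTop_le_orderTop_add

theorem zero_le_orderTop_pow {Γ : Type*} [AddCommMonoid Γ] [LinearOrder Γ] [IsOrderedCancelAddMonoid Γ]
    {x : HahnSeries Γ K} (hx : 0 ≤ x.orderTop) (k : ℕ) : 0 ≤ (x ^ k).orderTop := by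
  induction k with
  | zero => simp [pow_zero, HahnSeries.orderTop_one]
  | succ k ih =>
    rw [pow_succ]
    exact le_trans (add_nonneg ih hx) HahnSeries.orderTop_add_le_mul

theorem le_orderTop_of_coeff_eq_zero {Γ : Type*} [Zero Γ] [LinearOrder Γ]
    {x : HahnSeries Γ K} {n : Γ}
    (h : ∀ m, m < n → x.coeff m = 0) : (n : WithTop Γ) ≤ x.orderTop := by
  by_cases hx : x = 0
  · simp [hx]
  · rw [← HahnSeries.order_eq_orderTop_of_ne_zero hx, WithTop.coe_le_coe]
    by_contra hlt
    exact (HahnSeries.leadingCoeff_eq (x := x) ▸ HahnSeries.leadingCoeff_ne_zero.mpr hx) (h _ (not_le.mp hlt))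

theorem zero_lt_orderTop_of_support {Γ : Type*} [Zero Γ] [LinearOrder Γ]
    {x : HahnSeries Γ K} (h : ∀ m ∈ x.support, 0 < m) : 0 < x.orderTop := by
  by_cases hx : x = 0
  · rw [hx, HahnSeries.orderTop_zero]
    exact lt_top_iff_ne_top.mpr WithTop.coe_ne_top
  · exact HahnSeries.zero_lt_orderTop_of_order
      (h _ ((HahnSeries.mem_support _ _).mpr ((HahnSeries.leadingCoeff_eq (x := x) ▸ HahnSeries.leadingCoeff_ne_zero.mpr hx))))

theorem eval_sub_eval {Γ : Type*} [AddCommMonoid Γ] [LinearOrder Γ] [IsOrderedCancelAddMonoid Γ]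
    (F : Polynomial (HahnSeries Γ K)) (z z' : HahnSeries Γ K) :
    Polynomial.eval z F - Polynomial.eval z' F =
      (∑ j ∈ Finset.range (F.natDegree + 1),
        F.coeff j * ∑ k ∈ Finset.range j, z ^ k * z' ^ (j - 1 - k)) * (z - z') := by
  rw [Polynomial.eval_eq_sum_range, Polynomial.eval_eq_sum_range, ← Finset.sum_sub_distrib,
    Finset.sum_mul]
  refine Finset.sum_congr rfl fun j _ => ?_
  rw [mul_assoc, geom_sum₂_mul, mul_sub]

theorem orderTop_sub_lt_evalSub {Γ : Type*} [AddCommMonoid Γ] [LinearOrder Γ] [IsOrderedCancelAddMonoid Γ]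
    {F : Polynomial (HahnSeries Γ K)}
    (hord : ∀ j, F.coeff j ≠ 0 → 0 < (F.coeff j).order)
    {z z' : HahnSeries Γ K} (hz : 0 ≤ z.orderTop) (hz' : 0 ≤ z'.orderTop) (hne : z ≠ z') :
    (z - z').orderTop < (Polynomial.eval z F - Polynomial.eval z' F).orderTop := by
  have hsub : z - z' ≠ 0 := sub_ne_zero.mpr hne
  have hGpos : (0 : WithTop Γ) < (∑ j ∈ Finset.range (F.natDegree + 1),
      F.coeff j * ∑ k ∈ Finset.range j, z ^ k * z' ^ (j - 1 - k)).orderTop := by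
    refine lt_orderTop_sum WithTop.coe_ne_top fun j _ => ?_
    by_cases ha : F.coeff j = 0
    · rw [ha, zero_mul, HahnSeries.orderTop_zero]
      exact lt_top_iff_ne_top.mpr WithTop.coe_ne_top
    · have h1 : 0 < (F.coeff j).orderTop :=
        HahnSeries.zero_lt_orderTop_of_order (hord j ha)
      have h2 : 0 ≤ (∑ k ∈ Finset.range j, z ^ k * z' ^ (j - 1 - k)).orderTop :=
        le_orderTop_sum fun k _ =>
          le_trans
            (add_nonneg (zero_le_orderTop_pow hz k) (zero_le_orderTop_pow hz' (j - 1 - k)))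
            HahnSeries.orderTop_add_le_mul
      calc (0 : WithTop Γ) < (F.coeff j).orderTop := h1
        _ = (F.coeff j).orderTop + 0 := (add_zero _).symm
        _ ≤ (F.coeff j).orderTop +
            (∑ k ∈ Finset.range j, z ^ k * z' ^ (j - 1 - k)).orderTop :=
          add_le_add_right h2 _
        _ ≤ _ := HahnSeries.orderTop_add_le_mul
  rw [eval_sub_eval, mul_comm]
  calc (z - z').orderTop = (z - z').orderTop + 0 := (add_zero _).symm
    _ < (z - z').orderTop + (∑ j ∈ Finset.range (F.natDegree + 1),
          F.coeff j * ∑ k ∈ Finset.range j, z ^ k * z' ^ (j - 1 - k)).orderTop :=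
        WithTop.add_lt_add_left (HahnSeries.orderTop_ne_top.mpr hsub) hGpos
    _ ≤ _ := HahnSeries.orderTop_add_le_mul

end Helpers

/-- **Characterizations of the solutions of a strongly reduced Henselian equation via
truncations.**  Let `y = F(u,y)` be strongly reduced Henselian and `y₀` a generalized
series with support `⊆ {n >grlex 0}`.  The following are equivalent:
(1) `y₀ = F(u,y₀)`;
(2) `w(z̃_n − F(u,z̃_n)) = w(y₀ − z̃_n)` for all `n >grlex 0`;
(3) `w(z̃_n − F(u,z̃_n)) ≥grlex n` for all `n >grlex 0`. -/
theorem solution_iff_truncations {K : Type*} [Field K] [CharZero K]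
    {r : ℕ} (hr : 1 ≤ r) (F : Polynomial (HahnSeries (GrLexZ r) K))
    (hF : StronglyReducedHenselian F)
    (y0 : HahnSeries (GrLexZ r) K) (hsupp : ∀ n ∈ y0.support, 0 < n) :
    ((Polynomial.eval y0 F = y0) ↔
      (∀ n : GrLexZ r, 0 < n →
        (trunc y0 n - Polynomial.eval (trunc y0 n) F).orderTop
          = (y0 - trunc y0 n).orderTop)) ∧
    ((Polynomial.eval y0 F = y0) ↔
      (∀ n : GrLexZ r, 0 < n →
        (n : WithTop (GrLexZ r)) ≤
          (trunc y0 n - Polynomial.eval (trunc y0 n) F).orderTop)) := by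
  obtain ⟨hmod, hord, h0⟩ := hF
  have hcoeff : ∀ (n m : GrLexZ r), (trunc y0 n).coeff m = if m < n then y0.coeff m else 0 :=
    fun _ _ => rfl
  have hy0pos : 0 < y0.orderTop := zero_lt_orderTop_of_support hsupp
  have htrpos : ∀ n : GrLexZ r, 0 < (trunc y0 n).orderTop := by
    intro n
    refine zero_lt_orderTop_of_support fun m hm => hsupp m ?_
    rw [HahnSeries.mem_support] at hm ⊢
    rw [hcoeff] at hm
    intro hy
    apply hm
    split <;> simp [hy]
  have hdiff : ∀ n : GrLexZ r, (n : WithTop (GrLexZ r)) ≤ (y0 - trunc y0 n).orderTop := by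
    intro n
    refine le_orderTop_of_coeff_eq_zero fun m hm => ?_
    rw [HahnSeries.coeff_sub, hcoeff, if_pos hm, sub_self]
  have key12 : Polynomial.eval y0 F = y0 →
      ∀ n : GrLexZ r, 0 < n →
        (trunc y0 n - Polynomial.eval (trunc y0 n) F).orderTop
          = (y0 - trunc y0 n).orderTop := by
    intro he n _
    by_cases hz : y0 = trunc y0 n
    · rw [← hz, he, sub_self]
    · have hC : (y0 - trunc y0 n).orderTop <
          (Polynomial.eval y0 F - Polynomial.eval (trunc y0 n) F).orderTop :=
        orderTop_sub_lt_evalSub hord hy0pos.le (htrpos n).le hz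
      have hrw : trunc y0 n - Polynomial.eval (trunc y0 n) F
          = (trunc y0 n - y0) + (Polynomial.eval y0 F - Polynomial.eval (trunc y0 n) F) := by
        rw [he]; ring
      have hneg : (trunc y0 n - y0).orderTop = (y0 - trunc y0 n).orderTop := by
        rw [← neg_sub y0 (trunc y0 n), HahnSeries.orderTop_neg]
      rw [hrw, HahnSeries.orderTop_add_eq_left (by rw [hneg]; exact hC), hneg]
  have key23 : (∀ n : GrLexZ r, 0 < n →
        (trunc y0 n - Polynomial.eval (trunc y0 n) F).orderTop
          = (y0 - trunc y0 n).orderTop) →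
      ∀ n : GrLexZ r, 0 < n →
        (n : WithTop (GrLexZ r)) ≤
          (trunc y0 n - Polynomial.eval (trunc y0 n) F).orderTop := by
    intro h2 n hn
    rw [h2 n hn]
    exact hdiff n
  have key31 : (∀ n : GrLexZ r, 0 < n →
        (n : WithTop (GrLexZ r)) ≤
          (trunc y0 n - Polynomial.eval (trunc y0 n) F).orderTop) →
      Polynomial.eval y0 F = y0 := by
    intro h3
    by_contra hne
    have hg : y0 - Polynomial.eval y0 F ≠ 0 := sub_ne_zero.mpr fun h => hne h.symm
    obtain ⟨n, hn0, hnμ⟩ := GrLexZ.exists_big hr (y0 - Polynomial.eval y0 F).order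
    have hz := h3 n hn0
    have hrw : trunc y0 n - Polynomial.eval (trunc y0 n) F
        = (y0 - Polynomial.eval y0 F) +
          ((trunc y0 n - y0) + (Polynomial.eval y0 F - Polynomial.eval (trunc y0 n) F)) := by
      ring
    have hB : (n : WithTop (GrLexZ r)) ≤
        ((trunc y0 n - y0) +
          (Polynomial.eval y0 F - Polynomial.eval (trunc y0 n) F)).orderTop := by
      refine le_trans (le_min ?_ ?_) HahnSeries.min_orderTop_le_orderTop_add
      · rw [← neg_sub y0 (trunc y0 n), HahnSeries.orderTop_neg]
        exact hdiff n
      · by_cases hzz : y0 = trunc y0 n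
        · rw [← hzz, sub_self, HahnSeries.orderTop_zero]
          exact le_top
        · exact le_of_lt (lt_of_le_of_lt (hdiff n)
            (orderTop_sub_lt_evalSub hord hy0pos.le (htrpos n).le hzz))
    have hgo : (y0 - Polynomial.eval y0 F).orderTop
        = ((y0 - Polynomial.eval y0 F).order : WithTop (GrLexZ r)) :=
      (HahnSeries.order_eq_orderTop_of_ne_zero hg).symm
    have heq : (trunc y0 n - Polynomial.eval (trunc y0 n) F).orderTop
        = (y0 - Polynomial.eval y0 F).orderTop := by
      rw [hrw]
      exact HahnSeries.orderTop_add_eq_left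
        (lt_of_lt_of_le (by rw [hgo]; exact_mod_cast hnμ) hB)
    rw [heq, hgo] at hz
    exact absurd (WithTop.coe_le_coe.mp hz) (not_le.mpr hnμ)
  exact ⟨⟨fun he => key12 he, fun h2 => key31 (key23 h2)⟩,
    ⟨fun he => key23 (key12 he), key31⟩⟩
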